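/- (Lower bound on error-correction capability of concatenated codes, single-level case.) With the concatenated code C as above, fix for each ℓ a vector v_ℓ ∈ F_q^{n_ℓ} with w_H(v_ℓ) = d_H(B_ℓ), and let V = {(u_1 v_1, ..., u_m v_m) : u ∈ {0,1}^m, w_H(u) = d_H(A)}. Then t_λ(C) ≥ min_{v ∈ V} τ_λ(v). -/

import Mathlib

variable {F : Type} [Field F] [Fintype F] [DecidableEq F]

/-- Weighted-Hamming weight of a block-partitioned vector. -/
def wL {m : ℕ} (n : Fin m → ℕ) (lam : Fin m → ℕ) (a : ∀ ℓ, Fin (n ℓ) → F) : ℕ :=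
  ∑ ℓ, lam ℓ * hammingNorm (a ℓ)

/-- `τ_λ(c) + 1`: minimum over `r` of `max {w_λ(r), w_λ(c − r)}`. -/
noncomputable def tauAux {m : ℕ} (n lam : Fin m → ℕ) (c : ∀ ℓ, Fin (n ℓ) → F) : ℕ :=
  sInf {x | ∃ r : ∀ ℓ, Fin (n ℓ) → F, x = max (wL n lam r) (wL n lam (c - r))}

/-- Error-correction radius `τ_λ(c)`. -/
noncomputable def tau {m : ℕ} (n lam : Fin m → ℕ) (c : ∀ ℓ, Fin (n ℓ) → F) : ℕ :=
  tauAux n lam c - 1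

/-- Weighted-Hamming ball of radius `t`. -/
def ball {m : ℕ} (n lam : Fin m → ℕ) (t : ℕ) : Set (∀ ℓ, Fin (n ℓ) → F) :=
  {x | wL n lam x ≤ t}

/-- Difference set of the weighted-Hamming ball of radius `t`. -/
def dball {m : ℕ} (n lam : Fin m → ℕ) (t : ℕ) : Set (∀ ℓ, Fin (n ℓ) → F) :=
  {z | ∃ x ∈ ball n lam t, ∃ y ∈ ball n lam t, z = x - y}

/-- Minimum weighted-Hamming distance of a linear code. -/
noncomputable def dL {m : ℕ} (n lam : Fin m → ℕ) (C : Submodule F (∀ ℓ, Fin (n ℓ) → F)) : ℕ :=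
  sInf {x | ∃ c ∈ C, c ≠ 0 ∧ x = wL n lam c}

/-- Error-correction capability of a linear code. -/
noncomputable def tL {m : ℕ} (n lam : Fin m → ℕ) (C : Submodule F (∀ ℓ, Fin (n ℓ) → F)) : ℕ :=
  sInf {x | ∃ c ∈ C, c ≠ 0 ∧ x = tau n lam c}

section Concatenated

variable {m : ℕ} (nn md lam : Fin m → ℕ)
variable (enc : ∀ ℓ, (Fin (md ℓ) → F) →ₗ[F] (Fin (nn ℓ) → F))
variable (A : Submodule F (∀ ℓ, Fin (md ℓ) → F))

/-- The concatenated code `C = {(enc_1(a_1), …, enc_m(a_m)) : a ∈ A}`. -/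
def ccode : Set (∀ ℓ, Fin (nn ℓ) → F) :=
  {c | ∃ a ∈ A, c = fun ℓ => enc ℓ (a ℓ)}

/-- Minimum (block-symbol) Hamming distance of the polyalphabetic outer code `A`. -/
noncomputable def dHA : ℕ :=
  sInf {x | ∃ a ∈ A, a ≠ 0 ∧ x = (Finset.univ.filter fun ℓ => a ℓ ≠ 0).card}

/-- Minimum Hamming distance of the inner code `B_ℓ = range (enc ℓ)`. -/
noncomputable def dHB (ℓ : Fin m) : ℕ :=
  sInf {x | ∃ v ∈ Set.range (enc ℓ), v ≠ 0 ∧ x = hammingNorm v}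

/-- Minimum weighted-Hamming distance of a (not necessarily linear) set of vectors. -/
noncomputable def dLset (S : Set (∀ ℓ, Fin (nn ℓ) → F)) : ℕ :=
  sInf {x | ∃ c ∈ S, c ≠ 0 ∧ x = wL nn lam c}

/-- Error-correction capability of a set of vectors. -/
noncomputable def tLset (S : Set (∀ ℓ, Fin (nn ℓ) → F)) : ℕ :=
  sInf {x | ∃ c ∈ S, c ≠ 0 ∧ x = tau nn lam c}

/-- Sum of the `d_H(A)` smallest values among `{λ_ℓ · d_H(B_ℓ)}`
(i.e. `σ_1 + … + σ_{d_H(A)}` for the sorted sequence `σ_1 ≤ … ≤ σ_m`). -/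
noncomputable def sortedSum : ℕ :=
  (((Finset.univ.val.map fun ℓ => lam ℓ * dHB nn md enc ℓ).sort (· ≤ ·)).take
    (dHA md A)).sum

end Concatenated


/-! A nonzero codeword `c = (enc_ℓ a_ℓ)_ℓ` of the concatenated code has at least `d_H(A)`
nonzero blocks, and each of them has Hamming weight at least `d_H(B_ℓ) = w_H(v_ℓ)`. So some
pattern `v ∈ V` is dominated by `c` blockwise, and `τ_λ` is monotone under blockwise
domination of Hamming weights: an optimal split `c = r + (c - r)` is copied block by block
onto `v` by splitting the support of `v_ℓ` into pieces no heavier than `r_ℓ` and `c_ℓ - r_ℓ`. -/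

section Hamming

variable {ι : Type*} [Fintype ι] {β : ι → Type*}

lemma hammingNorm_le_card_of_support_subset [∀ i, Zero (β i)] [∀ i, DecidableEq (β i)]
    {x : ∀ i, β i} {T : Finset ι} (h : ∀ i, x i ≠ 0 → i ∈ T) : hammingNorm x ≤ T.card :=
  Finset.card_le_card fun i hi => h i (Finset.mem_filter.1 hi).2

variable [∀ i, AddGroup (β i)] [∀ i, DecidableEq (β i)]

lemma hammingNorm_le_add_hammingNorm_sub (r c : ∀ i, β i) :
    hammingNorm c ≤ hammingNorm r + hammingNorm (c - r) := by
  calc hammingNorm c = hammingDist c 0 := (hammingDist_zero_right c).symm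
    _ ≤ hammingDist c r + hammingDist r 0 := hammingDist_triangle c r 0
    _ = hammingNorm r + hammingNorm (c - r) := by
        rw [hammingDist_zero_right, add_comm]
        simp only [hammingDist, hammingNorm, Pi.sub_apply, sub_ne_zero]

lemma exists_hammingNorm_le_and_hammingNorm_sub_le {v : ∀ i, β i} {a b : ℕ}
    (h : hammingNorm v ≤ a + b) :
    ∃ r : ∀ i, β i, hammingNorm r ≤ a ∧ hammingNorm (v - r) ≤ b := by
  classical
  set S := Finset.univ.filter fun i => v i ≠ 0
  obtain ⟨T, hTS, hT⟩ := Finset.exists_subset_card_eq (min_le_left S.card a)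
  refine ⟨fun i => if i ∈ T then v i else 0, ?_, ?_⟩
  · refine (hammingNorm_le_card_of_support_subset fun i hi => ?_).trans (hT ▸ min_le_right _ _)
    by_contra hiT
    simp [hiT] at hi
  · have hsupp : ∀ i, (v - fun i => if i ∈ T then v i else 0) i ≠ 0 → i ∈ S \ T := by
      intro i hi
      by_cases hiT : i ∈ T
      · simp [hiT] at hi
      · simp_all [S]
    refine (hammingNorm_le_card_of_support_subset hsupp).trans ?_
    rw [Finset.card_sdiff_of_subset hTS, hT]
    change S.card ≤ a + b at h
    omega

end Hamming

lemma pi_map_ne_zero {ι R : Type*} [Semiring R] {M N : ι → Type*} [∀ i, AddCommMonoid (M i)]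
    [∀ i, AddCommMonoid (N i)] [∀ i, Module R (M i)] [∀ i, Module R (N i)]
    {f : ∀ i, M i →ₗ[R] N i} (hf : ∀ i, Function.Injective (f i)) {a : ∀ i, M i} (ha : a ≠ 0) :
    (fun i => f i (a i)) ≠ 0 := fun h =>
  ha <| funext fun i => hf i ((congrFun h i).trans (map_zero (f i)).symm)

section WeightedHamming

omit [Fintype F]

variable {m : ℕ} (n lam : Fin m → ℕ)

lemma wL_le_wL {a b : ∀ ℓ, Fin (n ℓ) → F} (h : ∀ ℓ, hammingNorm (a ℓ) ≤ hammingNorm (b ℓ)) :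
    wL n lam a ≤ wL n lam b :=
  Finset.sum_le_sum fun ℓ _ => Nat.mul_le_mul_left _ (h ℓ)

lemma tauAux_le (c r : ∀ ℓ, Fin (n ℓ) → F) :
    tauAux n lam c ≤ max (wL n lam r) (wL n lam (c - r)) :=
  Nat.sInf_le ⟨r, rfl⟩

lemma exists_tauAux_eq (c : ∀ ℓ, Fin (n ℓ) → F) :
    ∃ r, tauAux n lam c = max (wL n lam r) (wL n lam (c - r)) := by
  exact Nat.sInf_mem (s := {x | ∃ r : ∀ ℓ, Fin (n ℓ) → F,
    x = max (wL n lam r) (wL n lam (c - r))}) ⟨_, 0, rfl⟩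

lemma tauAux_mono {v c : ∀ ℓ, Fin (n ℓ) → F}
    (h : ∀ ℓ, hammingNorm (v ℓ) ≤ hammingNorm (c ℓ)) : tauAux n lam v ≤ tauAux n lam c := by
  obtain ⟨r, hr⟩ := exists_tauAux_eq n lam c
  have hsplit ℓ : ∃ s : Fin (n ℓ) → F,
      hammingNorm s ≤ hammingNorm (r ℓ) ∧ hammingNorm (v ℓ - s) ≤ hammingNorm (c ℓ - r ℓ) :=
    exists_hammingNorm_le_and_hammingNorm_sub_le
      ((h ℓ).trans (hammingNorm_le_add_hammingNorm_sub (r ℓ) (c ℓ)))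
  choose s hs hvs using hsplit
  calc tauAux n lam v ≤ max (wL n lam s) (wL n lam (v - s)) := tauAux_le n lam v s
    _ ≤ max (wL n lam r) (wL n lam (c - r)) :=
        max_le_max (wL_le_wL n lam hs) (wL_le_wL n lam hvs)
    _ = tauAux n lam c := hr.symm

lemma tau_mono {v c : ∀ ℓ, Fin (n ℓ) → F}
    (h : ∀ ℓ, hammingNorm (v ℓ) ≤ hammingNorm (c ℓ)) : tau n lam v ≤ tau n lam c :=
  Nat.sub_le_sub_right (tauAux_mono n lam h) 1

lemma tau_zero : tau n lam (0 : ∀ ℓ, Fin (n ℓ) → F) = 0 := by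
  have h := tauAux_le n lam (0 : ∀ ℓ, Fin (n ℓ) → F) 0
  simp only [sub_zero, max_self, wL, Pi.zero_apply, hammingNorm_zero, mul_zero,
    Finset.sum_const_zero, Nat.le_zero] at h
  simp [tau, h]

end WeightedHamming

section Concatenated

omit [Fintype F]

variable {m : ℕ} {nn md : Fin m → ℕ} {enc : ∀ ℓ, (Fin (md ℓ) → F) →ₗ[F] (Fin (nn ℓ) → F)}
  {A : Submodule F (∀ ℓ, Fin (md ℓ) → F)}

lemma dHB_le_hammingNorm (hinj : ∀ ℓ, Function.Injective (enc ℓ)) {ℓ : Fin m}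
    {x : Fin (md ℓ) → F} (hx : x ≠ 0) : dHB nn md enc ℓ ≤ hammingNorm (enc ℓ x) :=
  Nat.sInf_le ⟨_, ⟨x, rfl⟩, (map_ne_zero_iff _ (hinj ℓ)).2 hx, rfl⟩

lemma exists_tLset_eq (hinj : ∀ ℓ, Function.Injective (enc ℓ)) (lam : Fin m → ℕ)
    {a : ∀ ℓ, Fin (md ℓ) → F} (ha : a ∈ A) (ha0 : a ≠ 0) :
    ∃ b ∈ A, b ≠ 0 ∧ tLset nn lam (ccode nn md enc A) = tau nn lam (fun ℓ => enc ℓ (b ℓ)) := by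
  obtain ⟨_, ⟨b, hb, rfl⟩, hb0, hmin⟩ := Nat.sInf_mem (s := {x | ∃ c ∈ ccode nn md enc A, c ≠ 0 ∧
    x = tau nn lam c}) ⟨_, _, ⟨a, ha, rfl⟩, pi_map_ne_zero hinj ha0, rfl⟩
  refine ⟨b, hb, ?_, hmin⟩
  rintro rfl
  exact hb0 (funext fun ℓ => map_zero (enc ℓ))

lemma exists_pattern_le_encode (hinj : ∀ ℓ, Function.Injective (enc ℓ))
    {vfix : ∀ ℓ, Fin (nn ℓ) → F} (hv : ∀ ℓ, hammingNorm (vfix ℓ) = dHB nn md enc ℓ)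
    {a : ∀ ℓ, Fin (md ℓ) → F} (ha : a ∈ A) (ha0 : a ≠ 0) :
    ∃ u : Fin m → Bool, (Finset.univ.filter fun ℓ => u ℓ = true).card = dHA md A ∧
      ∀ ℓ, hammingNorm (if u ℓ then vfix ℓ else 0) ≤ hammingNorm (enc ℓ (a ℓ)) := by
  have hdA : dHA md A ≤ (Finset.univ.filter fun ℓ => a ℓ ≠ 0).card :=
    Nat.sInf_le ⟨a, ha, ha0, rfl⟩
  obtain ⟨T, hTa, hT⟩ := Finset.exists_subset_card_eq hdA
  refine ⟨fun ℓ => decide (ℓ ∈ T), ?_, fun ℓ => ?_⟩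
  · simpa only [decide_eq_true_eq, Finset.filter_mem_eq_inter, Finset.univ_inter] using hT
  · by_cases hℓ : ℓ ∈ T
    · simpa [hℓ, hv ℓ] using dHB_le_hammingNorm hinj (Finset.mem_filter.1 (hTa hℓ)).2
    · simp [hℓ]

end Concatenated

/-- lower bound on the error-correction capability of concatenated
codes: `t_λ(C) ≥ min_{v ∈ V} τ_λ(v)` where `V` consists of the vectors obtained by
placing a fixed minimum-weight inner codeword pattern `v_ℓ` on `d_H(A)` blocks. -/
theorem concat_tau_bound {m : ℕ} (nn md lam : Fin m → ℕ)
    (enc : ∀ ℓ, (Fin (md ℓ) → F) →ₗ[F] (Fin (nn ℓ) → F))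
    (hinj : ∀ ℓ, Function.Injective (enc ℓ))
    (A : Submodule F (∀ ℓ, Fin (md ℓ) → F))
    (vfix : ∀ ℓ, Fin (nn ℓ) → F)
    (hv : ∀ ℓ, hammingNorm (vfix ℓ) = dHB nn md enc ℓ) :
    sInf {x | ∃ u : Fin m → Bool,
        (Finset.univ.filter fun ℓ => u ℓ = true).card = dHA md A ∧
        x = tau nn lam (fun ℓ => if u ℓ then vfix ℓ else 0)} ≤
      tLset nn lam (ccode nn md enc A) := by
  by_cases hA : ∃ a ∈ A, a ≠ 0
  · obtain ⟨a, ha, ha0⟩ := hA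
    obtain ⟨b, hb, hb0, hmin⟩ := exists_tLset_eq hinj lam ha ha0
    obtain ⟨u, hu, hdom⟩ := exists_pattern_le_encode hinj hv hb hb0
    calc _ ≤ tau nn lam (fun ℓ => if u ℓ then vfix ℓ else 0) := by exact Nat.sInf_le ⟨u, hu, rfl⟩
      _ ≤ tau nn lam (fun ℓ => enc ℓ (b ℓ)) := tau_mono nn lam hdom
      _ = tLset nn lam (ccode nn md enc A) := hmin.symm
  · have hdA : dHA md A = 0 :=
      Nat.sInf_eq_zero.2 <| Or.inr <| Set.eq_empty_of_forall_notMem fun _ ⟨a, ha, ha0, _⟩ =>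
        hA ⟨a, ha, ha0⟩
    calc _ ≤ tau nn lam 0 := by exact Nat.sInf_le ⟨fun _ => false, by simp [hdA], rfl⟩
      _ = 0 := tau_zero nn lam
      _ ≤ tLset nn lam (ccode nn md enc A) := Nat.zero_le _
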